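/- arXiv:0904.2273 — 2 statements merged into one kernel-verified Lean document; each statement's English description precedes it below -/
import Mathlib

section
/- Let I be a t-ideal of a PVMD R, let {Q_α} be the set of all maximal prime ideals of Z(R,I) (the primes of Z(R,I) maximal under inclusion), and let {M_β} be the set of t-maximal ideals of R that do not contain I. Then: (1) (I:I) ⊇ (⋂_α R_{Q_α}) ∩ (⋂_β R_{M_β}); and (2) if R is a tQR-domain, then equality holds. -/
/-!
Common definitions: star operations (`v`- and `t`-closure), `t`-ideals, `t`-invertibility,
PVMDs, overrings, `t`-linked and `t`-flat overrings, localizations inside the quotient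
field, Nagata and Kaplansky transforms, endomorphism rings of ideals.
-/

open scoped Classical

namespace PVMDPaper

noncomputable section

section Generic

variable (A : Type*) [CommRing A] (K : Type*) [Field K] [Algebra A K]

/-- The image of an integral ideal of `A` inside the field `K`, as an `A`-submodule of `K`. -/
def toK (I : Ideal A) : Submodule A K := Submodule.map (Algebra.linearMap A K) I

variable {A K}

/-- The dual `I⁻¹ = (A : I) = {x ∈ K : x I ⊆ A}` of a submodule of `K`. -/
def dual (I : Submodule A K) : Submodule A K := 1 / I

/-- The `v`-closure `I_v = (I⁻¹)⁻¹`. -/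
def vOp (I : Submodule A K) : Submodule A K := 1 / (1 / I)

/-- The `t`-closure `I_t`: the union of `J_v` where `J` ranges over the nonzero finitely
generated submodules `J ≤ I` (the union of this directed family is its supremum). -/
def tOp (I : Submodule A K) : Submodule A K :=
  sSup {V | ∃ J : Submodule A K, J ≠ ⊥ ∧ J.FG ∧ J ≤ I ∧ V = vOp J}

variable (K)

/-- An (integral) ideal `I` of `A` is a `t`-ideal if `I = I_t`. -/
def IsTIdeal (I : Ideal A) : Prop := tOp (toK A K I) = toK A K I

/-- An ideal `I` is `t`-invertible if `(I I⁻¹)_t = A`. -/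
def IsTInvertible (I : Ideal A) : Prop := tOp (toK A K I * dual (toK A K I)) = 1

/-- A `t`-maximal ideal: an ideal maximal in the set of proper integral `t`-ideals. -/
def IsTMaximal (M : Ideal A) : Prop :=
  M ≠ ⊤ ∧ IsTIdeal K M ∧ ∀ J : Ideal A, J ≠ ⊤ → IsTIdeal K J → M ≤ J → J = M

variable (A)

/-- `A` is a Prüfer `v`-multiplication domain: every nonzero finitely generated ideal
is `t`-invertible. -/
def IsPVMD : Prop := ∀ I : Ideal A, I ≠ ⊥ → I.FG → IsTInvertible K I

/-- `Spec_t(A)` is Noetherian: the ascending chain condition on radical `t`-ideals. -/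
def TSpecNoetherian : Prop :=
  ∀ f : ℕ →o Ideal A, (∀ n, IsTIdeal K (f n) ∧ (f n).radical = f n) →
    ∃ n, ∀ m, n ≤ m → f m = f n

variable {A K}

/-- A submodule of `K` is a subring of `K` iff it contains `1` and is closed under
multiplication (being an additive subgroup already). -/
def IsSubringOf (S : Submodule A K) : Prop :=
  (1 : K) ∈ S ∧ ∀ x ∈ S, ∀ y ∈ S, x * y ∈ S

variable (K)

/-- The localization `A_P = {a/s : a ∈ A, s ∈ A ∖ P}` viewed as a subset of `K`. -/
def loc (P : Ideal A) : Set K :=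
  {x | ∃ a s : A, s ∉ P ∧ x * algebraMap A K s = algebraMap A K a}

/-- The set `J A_P = {a/s : a ∈ J, s ∈ A ∖ P} ⊆ K`. -/
def locIdealAt (J P : Ideal A) : Set K :=
  {x | ∃ a ∈ J, ∃ s : A, s ∉ P ∧ x * algebraMap A K s = algebraMap A K a}

/-- `Z(A, I)`: the set of zero divisors on `A/I`. -/
def ZSet (I : Ideal A) : Set A := {x | ∃ a : A, a ∉ I ∧ x * a ∈ I}

/-- `Q` is a maximal prime ideal of `Z(A,I)`: a prime contained in `Z(A,I)`, maximal
(under inclusion) among the primes contained in `Z(A,I)`. -/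
def MaxPrimeOfZ (I Q : Ideal A) : Prop :=
  Q.IsPrime ∧ (Q : Set A) ⊆ ZSet I ∧
    ∀ Q' : Ideal A, Q'.IsPrime → (Q' : Set A) ⊆ ZSet I → Q ≤ Q' → Q' = Q

end Generic

section Overring

variable {R : Type*} [CommRing R] [IsDomain R]
variable {K : Type*} [Field K] [Algebra R K] [IsFractionRing R K]

/-- The extension `IT` of an ideal `I` of `R` to an overring `T`, as a `T`-submodule of `K`. -/
def extendI (I : Ideal R) (T : Subalgebra R K) : Submodule T K :=
  Submodule.span T (algebraMap R K '' (I : Set R))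

/-- The extension `IT` of an `R`-submodule `I` of `K` to an overring `T`. -/
def extendS (I : Submodule R K) (T : Subalgebra R K) : Submodule T K :=
  Submodule.span T (I : Set K)

/-- An overring `T` of `R` is `t`-linked over `R` if `(IT)⁻¹ = T` for each finitely
generated ideal `I` of `R` with `I⁻¹ = R`. -/
def IsTLinked (T : Subalgebra R K) : Prop :=
  ∀ I : Ideal R, I.FG → dual (toK R K I) = 1 → dual (extendI I T) = 1

/-- An overring `T` of `R` is `t`-flat over `R` if `T_M = R_{M ∩ R}` for each
`t`-maximal ideal `M` of `T`. -/
def IsTFlat (T : Subalgebra R K) : Prop :=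
  ∀ M : Ideal T, IsTMaximal K M → loc K M = loc K (M.comap (algebraMap R T))

variable (R K)

/-- `R` is a `tQR`-domain: a PVMD all of whose `t`-linked overrings are localizations
of `R` at multiplicative sets. -/
def IsTQR : Prop :=
  IsPVMD R K ∧ ∀ T : Subalgebra R K, IsTLinked T → ∃ S : Submonoid R,
    (T : Set K) = {x | ∃ a : R, ∃ s ∈ S, x * algebraMap R K s = algebraMap R K a}

variable {R K}
variable (K)

/-- The endomorphism ring `(I : I) = {x ∈ K : x I ⊆ I}` of an ideal `I`, as an
overring of `R`. -/
def endoRing (I : Ideal R) : Subalgebra R K where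
  carrier := {x : K | ∀ y ∈ toK R K I, x * y ∈ toK R K I}
  mul_mem' := by
    intro a b ha hb y hy
    rw [mul_assoc]
    exact ha _ (hb _ hy)
  one_mem' := by
    intro y hy
    rwa [one_mul]
  add_mem' := by
    intro a b ha hb y hy
    rw [add_mul]
    exact Submodule.add_mem _ (ha y hy) (hb y hy)
  zero_mem' := by
    intro y hy
    rw [zero_mul]
    exact Submodule.zero_mem _
  algebraMap_mem' := by
    intro r y hy
    rw [← Algebra.smul_def]
    exact Submodule.smul_mem _ r hy

set_option synthInstance.maxHeartbeats 400000 in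
/-- The ideal `I`, viewed as an ideal of its endomorphism ring `(I : I)`. -/
def idealInEndo (I : Ideal R) : Ideal (endoRing K I) where
  carrier := {x | (x : K) ∈ toK R K I}
  add_mem' := by
    intro a b ha hb
    simp only [Set.mem_setOf_eq] at *
    rw [AddMemClass.coe_add]
    exact Submodule.add_mem _ ha hb
  zero_mem' := by
    simp only [Set.mem_setOf_eq, ZeroMemClass.coe_zero]
    exact Submodule.zero_mem _
  smul_mem' := by
    intro c x hx
    simp only [Set.mem_setOf_eq] at *
    rw [smul_eq_mul, MulMemClass.coe_mul]
    exact c.2 _ hx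

/-- The Kaplansky transform `Ω(I) = {u ∈ K : ∀ a ∈ I, ∃ n ≥ 1, u aⁿ ∈ R}`, as an
overring of `R`. -/
def kaplansky (I : Ideal R) : Subalgebra R K where
  carrier := {u : K | ∀ a ∈ I, ∃ n : ℕ, 0 < n ∧
    ∃ r : R, u * (algebraMap R K a) ^ n = algebraMap R K r}
  mul_mem' := by
    intro u v hu hv a ha
    obtain ⟨n, hn, r, hr⟩ := hu a ha
    obtain ⟨m, hm, s, hs⟩ := hv a ha
    refine ⟨n + m, by omega, r * s, ?_⟩
    rw [map_mul, ← hr, ← hs, pow_add]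
    ring
  one_mem' := by
    intro a ha
    exact ⟨1, one_pos, a, by rw [pow_one, one_mul]⟩
  add_mem' := by
    intro u v hu hv a ha
    obtain ⟨n, hn, r, hr⟩ := hu a ha
    obtain ⟨m, hm, s, hs⟩ := hv a ha
    refine ⟨n + m, by omega, r * a ^ m + s * a ^ n, ?_⟩
    rw [map_add, map_mul, map_mul, map_pow, map_pow, ← hr, ← hs, pow_add, add_mul]
    ring
  zero_mem' := by
    intro a ha
    exact ⟨1, one_pos, 0, by rw [map_zero, zero_mul]⟩
  algebraMap_mem' := by
    intro r a ha
    exact ⟨1, one_pos, r * a, by rw [map_mul, pow_one]⟩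

/-- The Nagata (ideal) transform `T(I) = ⋃_{n ≥ 1} (R : Iⁿ)`, as an overring of `R`. -/
def nagata (I : Ideal R) : Subalgebra R K where
  carrier := {x : K | ∃ n : ℕ, ∀ y ∈ I ^ (n + 1),
    ∃ r : R, x * algebraMap R K y = algebraMap R K r}
  mul_mem' := by
    intro x x' hx hx'
    obtain ⟨n, hn⟩ := hx
    obtain ⟨m, hm⟩ := hx'
    refine ⟨n + m + 1, fun y hy => ?_⟩
    rw [show n + m + 1 + 1 = (n + 1) + (m + 1) by omega, pow_add] at hy
    refine Submodule.mul_induction_on hy ?_ ?_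
    · intro a ha b hb
      obtain ⟨r, hr⟩ := hn a ha
      obtain ⟨s, hs⟩ := hm b hb
      refine ⟨r * s, ?_⟩
      rw [map_mul, map_mul, ← hr, ← hs]
      ring
    · rintro y1 y2 ⟨r1, h1⟩ ⟨r2, h2⟩
      exact ⟨r1 + r2, by rw [map_add, map_add, mul_add, h1, h2]⟩
  one_mem' := ⟨0, fun y _ => ⟨y, by rw [one_mul]⟩⟩
  add_mem' := by
    intro x x' hx hx'
    obtain ⟨n, hn⟩ := hx
    obtain ⟨m, hm⟩ := hx'
    refine ⟨n + m + 1, fun y hy => ?_⟩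
    have h1 : y ∈ I ^ (n + 1) := Ideal.pow_le_pow_right (by omega) hy
    have h2 : y ∈ I ^ (m + 1) := Ideal.pow_le_pow_right (by omega) hy
    obtain ⟨r, hr⟩ := hn y h1
    obtain ⟨s, hs⟩ := hm y h2
    exact ⟨r + s, by rw [map_add, add_mul, hr, hs]⟩
  zero_mem' := ⟨0, fun y _ => ⟨0, by rw [map_zero, zero_mul]⟩⟩
  algebraMap_mem' := by
    intro r
    exact ⟨0, fun y _ => ⟨r * y, by rw [map_mul]⟩⟩

end Overring

/-!
(1) Let `x` lie in every `R_{Q_α}` and `R_{M_β}`, and suppose `x a ∉ I` for some `a ∈ I`. The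
conductor `J = (I :_R x a)` is a proper `t`-ideal because `I` is one, so it lies in a `t`-maximal
ideal `M`. If `J ⊆ P` with `x ∈ R_P`, then some `s ∉ P` has `x s ∈ R`, so `s ∈ J ⊆ P`; applied
to the `Q_α` and the `M_β` this shows `J ⊄ Z(R, I)` and `I ⊆ M`. Pick `r ∈ J` regular on `R/I`.
Since `R` is a PVMD, `R_M` is a valuation domain, and comparing `r` with `r x a ∈ I` in `R_M`
either puts some `u ∉ M` into `J` or makes `r` a zero divisor on `R/I`.

(2) Since `I` is a `t`-ideal, `(I : I)` is `t`-linked over `R`, so in a `tQR`-domain it equals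
some `R_S`. Every `s ∈ S` is regular on `R/I` because `1/s ∈ (I : I)`, so `R_S ⊆ R_{Q_α}`; and
`(I : I) ⊆ R_M` whenever `I ⊄ M`.
-/

section Algebra

variable {R : Type*} [CommRing R] {K : Type*} [Field K] [Algebra R K]

lemma mem_toK {J : Ideal R} {z : K} : z ∈ toK R K J ↔ ∃ r ∈ J, algebraMap R K r = z :=
  Submodule.mem_map

lemma toK_mono {P Q : Ideal R} (h : P ≤ Q) : toK R K P ≤ toK R K Q :=
  Submodule.map_mono h

lemma toK_le_one (J : Ideal R) : toK R K J ≤ 1 := by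
  rintro _ ⟨r, -, rfl⟩
  exact Submodule.mem_one.mpr ⟨r, rfl⟩

lemma mem_vOp {F : Submodule R K} {x : K} :
    x ∈ vOp F ↔ ∀ y, (∀ f ∈ F, y * f ∈ (1 : Submodule R K)) → x * y ∈ (1 : Submodule R K) := by
  simp only [vOp, Submodule.mem_div_iff_forall_mul_mem]

lemma vOp_le_one {F : Submodule R K} (hF : F ≤ 1) : vOp F ≤ 1 := fun x hx => by
  simpa using mem_vOp.mp hx 1 fun f hf => by simpa using hF hf

lemma mul_mem_vOp_mul_span_singleton {F : Submodule R K} {w : K} (hw : w ∈ vOp F) (d : K) :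
    w * d ∈ vOp (F * Submodule.span R {d}) := by
  refine mem_vOp.mpr fun y hy => ?_
  have hyd : ∀ f ∈ F, d * y * f ∈ (1 : Submodule R K) := fun f hf => by
    simpa only [mul_comm, mul_left_comm] using
      hy (f * d) (Submodule.mul_mem_mul hf (Submodule.mem_span_singleton_self d))
  simpa only [mul_assoc, mul_comm, mul_left_comm] using mem_vOp.mp hw _ hyd

lemma vOp_le_tOp {J M : Submodule R K} (hJ0 : J ≠ ⊥) (hJfg : J.FG) (hJM : J ≤ M) :
    vOp J ≤ tOp M :=
  le_sSup ⟨J, hJ0, hJfg, hJM, rfl⟩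

lemma tOp_le {M P : Submodule R K}
    (h : ∀ J : Submodule R K, J ≠ ⊥ → J.FG → J ≤ M → vOp J ≤ P) : tOp M ≤ P :=
  sSup_le <| by
    rintro _ ⟨J, hJ0, hJfg, hJM, rfl⟩
    exact h J hJ0 hJfg hJM

lemma le_tOp (M : Submodule R K) : M ≤ tOp M := by
  intro x hx
  rcases eq_or_ne x 0 with rfl | hx0
  · exact zero_mem _
  refine vOp_le_tOp (by simpa [Submodule.span_singleton_eq_bot] using hx0)
    (Submodule.fg_span_singleton x) ((Submodule.span_singleton_le_iff_mem x M).mpr hx) ?_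
  refine mem_vOp.mpr fun y hy => ?_
  rw [mul_comm]
  exact hy x (Submodule.mem_span_singleton_self x)

lemma tOp_mono {M N : Submodule R K} (h : M ≤ N) : tOp M ≤ tOp N :=
  tOp_le fun _ hJ0 hJfg hJM => vOp_le_tOp hJ0 hJfg (hJM.trans h)

variable {I : Ideal R}

lemma mul_mem_toK_of_mem_vOp (hI : IsTIdeal K I) {F : Submodule R K} (hF0 : F ≠ ⊥)
    (hFfg : F.FG) {w : K} (hw : w ∈ vOp F) {d : K} (hFd : ∀ f ∈ F, f * d ∈ toK R K I) :
    w * d ∈ toK R K I := by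
  rcases eq_or_ne d 0 with rfl | hd0
  · simp
  have hle : F * Submodule.span R {d} ≤ toK R K I := Submodule.mul_le.mpr fun f hf z hz => by
    obtain ⟨c, rfl⟩ := Submodule.mem_span_singleton.mp hz
    rw [mul_smul_comm]
    exact Submodule.smul_mem _ c (hFd f hf)
  have hne : F * Submodule.span R {d} ≠ ⊥ := by
    simp [Submodule.mul_eq_bot, hF0, hd0]
  exact hI ▸ vOp_le_tOp hne (hFfg.mul (Submodule.fg_span_singleton d)) hle
    (mul_mem_vOp_mul_span_singleton hw d)

lemma isTIdeal_colon (hI : IsTIdeal K I) (d : K) : IsTIdeal K ((toK R K I).colon {d}) := by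
  refine le_antisymm (tOp_le fun F hF0 hFfg hFle w hw => ?_) (le_tOp _)
  obtain ⟨ρ, rfl⟩ := Submodule.mem_one.mp (vOp_le_one (hFle.trans (toK_le_one _)) hw)
  refine mem_toK.mpr ⟨ρ, ?_, rfl⟩
  rw [Submodule.mem_colon_singleton, Algebra.smul_def]
  refine mul_mem_toK_of_mem_vOp hI hF0 hFfg hw fun f hf => ?_
  obtain ⟨r, hr, rfl⟩ := mem_toK.mp (hFle hf)
  simpa [Algebra.smul_def] using hr

lemma colon_not_le_of_mem_loc {a : R} (ha : a ∈ I) {x : K} {P : Ideal R} (hx : x ∈ loc K P) :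
    ¬ (toK R K I).colon {x * algebraMap R K a} ≤ P := by
  obtain ⟨b, s, hs, hxs⟩ := hx
  refine fun hle => hs (hle ?_)
  rw [Submodule.mem_colon_singleton, Algebra.smul_def, ← mul_assoc, mul_comm _ x, hxs, ← map_mul]
  exact mem_toK.mpr ⟨_, I.mul_mem_left b ha, rfl⟩

lemma coe_div_toK_self : ((toK R K I / toK R K I : Submodule R K) : Set K) = endoRing K I :=
  Set.ext fun _ => Submodule.mem_div_iff_forall_mul_mem

lemma mem_loc_of_mem_endoRing_of_not_le {M : Ideal R} (hIM : ¬ I ≤ M) {x : K}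
    (hx : x ∈ endoRing K I) : x ∈ loc K M := by
  obtain ⟨a, haI, haM⟩ := SetLike.not_le_iff_exists.mp hIM
  obtain ⟨i, -, hi⟩ := mem_toK.mp (hx _ (mem_toK.mpr ⟨a, haI, rfl⟩))
  exact ⟨i, a, haM, hi.symm⟩

lemma isTIdeal_sSup_of_isChain {c : Set (Ideal R)} (hne : c.Nonempty) (hch : IsChain (· ≤ ·) c)
    (ht : ∀ P ∈ c, IsTIdeal K P) : IsTIdeal K (sSup c) := by
  refine le_antisymm (tOp_le fun F hF0 hFfg hFle => ?_) (le_tOp _)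
  have hdir : DirectedOn (· ≤ ·) (Set.range fun P : c => toK R K (P : Ideal R)) :=
    (hch.directedOn.directed_val.mono_comp (· ≤ ·) fun _ _ => toK_mono).directedOn_range
  rw [toK, sSup_eq_iSup', Submodule.map_iSup, ← sSup_range] at hFle
  obtain ⟨_, ⟨P, rfl⟩, hFP⟩ :=
    (CompleteLattice.isCompactElement_iff_le_of_directed_sSup_le (Submodule R K) F).mp
      ((Submodule.fg_iff_compact F).mp hFfg) _ (Set.range_nonempty_iff_nonempty.mpr
        hne.to_subtype) hdir hFle
  calc vOp F ≤ tOp (toK R K (P : Ideal R)) := vOp_le_tOp hF0 hFfg hFP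
    _ = toK R K (P : Ideal R) := ht P P.2
    _ ≤ toK R K (sSup c) := toK_mono (le_sSup P.2)

variable (K) in
lemma exists_le_isTMaximal {J : Ideal R} (hJ : J ≠ ⊤) (ht : IsTIdeal K J) :
    ∃ M : Ideal R, J ≤ M ∧ IsTMaximal K M := by
  have hchain : ∀ c ⊆ {P : Ideal R | P ≠ ⊤ ∧ IsTIdeal K P}, IsChain (· ≤ ·) c → ∀ P ∈ c,
      sSup c ≠ ⊤ ∧ IsTIdeal K (sSup c) := fun c hcs hch P hP => by
    refine ⟨?_, isTIdeal_sSup_of_isChain ⟨P, hP⟩ hch fun P hP => (hcs hP).2⟩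
    rw [Ne, Ideal.eq_top_iff_one, Submodule.mem_sSup_of_directed ⟨P, hP⟩ hch.directedOn]
    rintro ⟨Q, hQc, hQ1⟩
    exact (hcs hQc).1 ((Ideal.eq_top_iff_one Q).mpr hQ1)
  obtain ⟨M, hJM, hM⟩ := zorn_le_nonempty₀ _
    (fun c hcs hch P hP => ⟨sSup c, hchain c hcs hch P hP, fun _ => le_sSup⟩) J ⟨hJ, ht⟩
  exact ⟨M, hJM, hM.prop.1, hM.prop.2, fun J' h1 h2 h3 => le_antisymm (hM.le_of_ge ⟨h1, h2⟩ h3) h3⟩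

end Algebra

section ZeroDivisors

variable {R : Type*} [CommRing R] {I : Ideal R}

lemma mem_ZSet_of_mem (htop : I ≠ ⊤) {r : R} (hr : r ∈ I) : r ∈ ZSet I :=
  ⟨1, (Ideal.ne_top_iff_one I).mp htop, by simpa using hr⟩

variable (I) in
def regularMod : Submonoid R where
  carrier := (ZSet I)ᶜ
  one_mem' := fun ⟨_, ha, h⟩ => ha (by simpa using h)
  mul_mem' {s t} hs ht := fun ⟨a, ha, h⟩ =>
    hs ⟨t * a, fun hta => ht ⟨a, ha, hta⟩, by rwa [← mul_assoc]⟩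

lemma subset_ZSet_iff_disjoint {J : Ideal R} :
    (J : Set R) ⊆ ZSet I ↔ Disjoint (J : Set R) (regularMod I) := by
  rw [← Set.subset_compl_iff_disjoint_right]
  show _ ↔ _ ⊆ (ZSet I)ᶜᶜ
  rw [compl_compl]

lemma exists_le_maxPrimeOfZ {J : Ideal R} (hJ : (J : Set R) ⊆ ZSet I) :
    ∃ Q : Ideal R, J ≤ Q ∧ MaxPrimeOfZ I Q := by
  simp_rw [MaxPrimeOfZ, subset_ZSet_iff_disjoint] at hJ ⊢
  have hchain : ∀ c ⊆ {P : Ideal R | Disjoint (P : Set R) (regularMod I)}, IsChain (· ≤ ·) c →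
      ∀ P ∈ c, Disjoint ((sSup c : Ideal R) : Set R) (regularMod I) := fun c hc hch P hP =>
    Set.disjoint_left.mpr fun x hx => by
      obtain ⟨P', hP'c, hxP'⟩ := (Submodule.mem_sSup_of_directed ⟨P, hP⟩ hch.directedOn).mp hx
      exact Set.disjoint_left.mp (hc hP'c) hxP'
  obtain ⟨Q, hJQ, hQ⟩ := zorn_le_nonempty₀ _
    (fun c hc hch P hP => ⟨sSup c, hchain c hc hch P hP, fun _ => le_sSup⟩) J hJ
  exact ⟨Q, hJQ, Ideal.isPrime_of_maximally_disjoint Q _ hQ.1 (fun _ => hQ.not_prop_of_gt),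
    hQ.1, fun Q' _ hQ' hle => le_antisymm (hQ.le_of_ge hQ' hle) hle⟩

end ZeroDivisors

section FractionRing

variable {R : Type*} [CommRing R] {K : Type*} [Field K] [Algebra R K] [IsFractionRing R K]

lemma algebraMap_mem_toK {J : Ideal R} {r : R} : algebraMap R K r ∈ toK R K J ↔ r ∈ J := by
  rw [mem_toK]
  exact ⟨fun ⟨_, hr', h⟩ => IsFractionRing.injective R K h ▸ hr', fun h => ⟨r, h, rfl⟩⟩

lemma one_mem_toK_iff {J : Ideal R} : (1 : K) ∈ toK R K J ↔ J = ⊤ := by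
  rw [← map_one (algebraMap R K), algebraMap_mem_toK, Ideal.eq_top_iff_one]

lemma toK_ne_bot {J : Ideal R} (hJ : J ≠ ⊥) : toK R K J ≠ ⊥ := by
  obtain ⟨j, hj, hj0⟩ := Submodule.exists_mem_ne_zero_of_ne_bot hJ
  exact Submodule.ne_bot_iff _ |>.mpr
    ⟨_, algebraMap_mem_toK.mpr hj, (IsFractionRing.to_map_eq_zero_iff).not.mpr hj0⟩

variable {I : Ideal R}

lemma exists_mul_dual_notMem_of_isTMaximal (hR : IsPVMD R K) {M : Ideal R}
    (hM : IsTMaximal K M) {G : Ideal R} (hG0 : G ≠ ⊥) (hGfg : G.FG) :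
    ∃ g ∈ toK R K G, ∃ h ∈ dual (toK R K G), g * h ∉ toK R K M := by
  by_contra! hle
  have hone : (1 : Submodule R K) ≤ toK R K M := calc
    1 = tOp (toK R K G * dual (toK R K G)) := (hR G hG0 hGfg).symm
    _ ≤ tOp (toK R K M) := tOp_mono (Submodule.mul_le.mpr hle)
    _ = toK R K M := hM.2.1
  exact hM.1 (one_mem_toK_iff.mp (hone (Submodule.mem_one.mpr ⟨1, map_one _⟩)))

/-- In a PVMD, the localization at a `t`-maximal ideal is a valuation domain. -/
lemma IsTMaximal.exists_notMem_mul_eq_mul (hR : IsPVMD R K) {M : Ideal R} (hM : IsTMaximal K M)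
    (α β : R) : ∃ u ∉ M, ∃ c : R, u * β = α * c ∨ u * α = β * c := by
  rcases eq_or_ne α 0 with rfl | hα
  · exact ⟨1, (Ideal.ne_top_iff_one M).mp hM.1, 0, Or.inr (by simp)⟩
  have hG0 : Ideal.span {α, β} ≠ ⊥ := fun h => hα (Ideal.span_eq_bot.mp h α (by simp))
  obtain ⟨g, hg, h, hh, hgh⟩ :=
    exists_mul_dual_notMem_of_isTMaximal hR hM hG0 (Submodule.fg_span (Set.toFinite _))
  obtain ⟨m, hm, rfl⟩ := mem_toK.mp hg
  obtain ⟨r, t, rfl⟩ := Ideal.mem_span_pair.mp hm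
  have hmul : ∀ γ ∈ ({α, β} : Set R), ∃ p : R, algebraMap R K p = algebraMap R K γ * h :=
    fun γ hγ => Submodule.mem_one.mp <| mul_comm h _ ▸
      Submodule.mem_div_iff_forall_mul_mem.mp hh _ (algebraMap_mem_toK.mpr (Ideal.subset_span hγ))
  obtain ⟨p, hp⟩ := hmul α (by simp)
  obtain ⟨q, hq⟩ := hmul β (by simp)
  have hpq : r * p + t * q ∉ M := by
    rw [← algebraMap_mem_toK (K := K)]
    convert hgh using 1
    simp only [map_add, map_mul, hp, hq]
    ring
  by_cases hpM : p ∈ M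
  · refine ⟨q, fun hqM => hpq (M.add_mem (M.mul_mem_left _ hpM) (M.mul_mem_left _ hqM)), p,
      Or.inr (IsFractionRing.injective R K ?_)⟩
    simp only [map_mul, hp, hq]
    ring
  · refine ⟨p, hpM, q, Or.inl (IsFractionRing.injective R K ?_)⟩
    simp only [map_mul, hp, hq]
    ring

lemma colon_not_le_of_notMem_ZSet (hR : IsPVMD R K) {M : Ideal R} (hM : IsTMaximal K M)
    (hIM : I ≤ M) {d : K} {r : R} (hr : r ∈ (toK R K I).colon {d}) (hrZ : r ∉ ZSet I) :
    ¬ (toK R K I).colon {d} ≤ M := by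
  have hr0 : algebraMap R K r ≠ 0 := by
    rw [Ne, IsFractionRing.to_map_eq_zero_iff]
    rintro rfl
    exact hrZ (mem_ZSet_of_mem (ne_top_of_le_ne_top hM.1 hIM) I.zero_mem)
  rw [Submodule.mem_colon_singleton, Algebra.smul_def] at hr
  obtain ⟨i, hi, hid⟩ := mem_toK.mp hr
  obtain ⟨u, huM, c, huc | huc⟩ := hM.exists_notMem_mul_eq_mul hR r i
  · have hc : c ∈ I := by
      by_contra hc
      exact hrZ ⟨c, hc, huc ▸ I.mul_mem_left u hi⟩
    have hud : algebraMap R K u * d = algebraMap R K c := mul_left_cancel₀ hr0 <| by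
      rw [mul_left_comm, ← hid, ← map_mul, ← map_mul, huc]
    refine fun hle => huM (hle ?_)
    rw [Submodule.mem_colon_singleton, Algebra.smul_def, hud]
    exact algebraMap_mem_toK.mpr hc
  · exact absurd ⟨u, fun hu => huM (hIM hu), mul_comm r u ▸ huc ▸ I.mul_mem_right c hi⟩ hrZ

lemma mem_endoRing_of_forall_mem_loc (hR : IsPVMD R K) (hI : IsTIdeal K I) {x : K}
    (hQ : ∀ Q : Ideal R, MaxPrimeOfZ I Q → x ∈ loc K Q)
    (hM : ∀ M : Ideal R, IsTMaximal K M → ¬ I ≤ M → x ∈ loc K M) : x ∈ endoRing K I := by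
  intro z hz
  obtain ⟨a, ha, rfl⟩ := mem_toK.mp hz
  by_contra hxa
  set J := (toK R K I).colon {x * algebraMap R K a}
  have hJ : J ≠ ⊤ := fun hJ => hxa <| by
    simpa using Submodule.mem_colon_singleton.mp (hJ ▸ Submodule.mem_top : (1 : R) ∈ J)
  obtain ⟨M, hJM, hM'⟩ := exists_le_isTMaximal K hJ (isTIdeal_colon hI _)
  have hJZ : ¬ (J : Set R) ⊆ ZSet I := fun hJZ => by
    obtain ⟨Q, hJQ, hQ'⟩ := exists_le_maxPrimeOfZ hJZ
    exact colon_not_le_of_mem_loc ha (hQ Q hQ') hJQ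
  obtain ⟨r, hrJ, hrZ⟩ := Set.not_subset.mp hJZ
  by_cases hIM : I ≤ M
  · exact colon_not_le_of_notMem_ZSet hR hM' hIM hrJ hrZ hJM
  · exact colon_not_le_of_mem_loc ha (hM M hM' hIM) hJM

lemma isTLinked_endoRing (hI : IsTIdeal K I) : IsTLinked (endoRing K I) := by
  intro J hJfg hJdual
  refine le_antisymm (fun u hu => ?_) (Submodule.le_div_iff_mul_le.mpr ?_)
  · suffices hu' : u ∈ endoRing K I from Submodule.mem_one.mpr ⟨⟨u, hu'⟩, rfl⟩
    rcases eq_or_ne J ⊥ with rfl | hJ0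
    · have hu1 : u ∈ dual (toK R K (⊥ : Ideal R)) := by
        refine Submodule.mem_div_iff_forall_mul_mem.mpr fun y hy => ?_
        obtain ⟨_, rfl, rfl⟩ := mem_toK.mp hy
        simp
      obtain ⟨r, rfl⟩ := Submodule.mem_one.mp (hJdual ▸ hu1)
      exact (endoRing K I).algebraMap_mem r
    have huJ : ∀ j ∈ J, u * algebraMap R K j ∈ endoRing K I := fun j hj => by
      obtain ⟨t, ht⟩ := Submodule.mem_one.mp
        (Submodule.mem_div_iff_forall_mul_mem.mp hu _ (Submodule.subset_span ⟨j, hj, rfl⟩))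
      exact ht ▸ t.2
    have hone : (1 : K) ∈ vOp (toK R K J) := by
      change (1 : K) ∈ 1 / dual (toK R K J)
      rw [hJdual]
      exact Submodule.mem_div_iff_forall_mul_mem.mpr fun y hy => by rwa [one_mul]
    intro z hz
    simpa using mul_mem_toK_of_mem_vOp hI (toK_ne_bot hJ0)
      (Submodule.FG.map (Algebra.linearMap R K) hJfg) hone fun f hf => by
      obtain ⟨j, hj, rfl⟩ := mem_toK.mp hf
      simpa only [mul_assoc, mul_comm, mul_left_comm] using huJ j hj z hz
  · rw [one_mul, extendI, Submodule.span_le]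
    rintro _ ⟨j, -, rfl⟩
    exact Submodule.mem_one.mpr ⟨algebraMap R (endoRing K I) j, rfl⟩

lemma notMem_ZSet_of_inv_mem_endoRing {s : R} (hs : s ≠ 0)
    (h : (algebraMap R K s)⁻¹ ∈ endoRing K I) : s ∉ ZSet I := by
  rintro ⟨a, ha, hsa⟩
  have := h _ (algebraMap_mem_toK.mpr hsa)
  rw [map_mul, ← mul_assoc, inv_mul_cancel₀ (IsFractionRing.to_map_eq_zero_iff.not.mpr hs),
    one_mul, algebraMap_mem_toK] at this
  exact ha this

lemma notMem_ZSet_of_mem_submonoid (hbot : I ≠ ⊥) (htop : I ≠ ⊤) {S : Submonoid R}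
    (hS : (endoRing K I : Set K) =
      {x | ∃ a : R, ∃ s ∈ S, x * algebraMap R K s = algebraMap R K a})
    {s : R} (hs : s ∈ S) : s ∉ ZSet I := by
  have hmem : ∀ y : K, (∃ a : R, y * algebraMap R K s = algebraMap R K a) → y ∈ endoRing K I :=
    fun y ⟨a, ha⟩ => by
      rw [← SetLike.mem_coe, hS]
      exact ⟨a, s, hs, ha⟩
  rcases eq_or_ne s 0 with rfl | hs0
  · obtain ⟨i, hi, hi0⟩ := Submodule.exists_mem_ne_zero_of_ne_bot hbot
    exact absurd (mem_ZSet_of_mem htop hi)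
      (notMem_ZSet_of_inv_mem_endoRing hi0 (hmem _ ⟨0, by simp⟩))
  · refine notMem_ZSet_of_inv_mem_endoRing hs0 (hmem _ ⟨1, ?_⟩)
    rw [map_one, inv_mul_cancel₀ (IsFractionRing.to_map_eq_zero_iff.not.mpr hs0)]

lemma mem_loc_of_mem_endoRing_of_subset_ZSet (hbot : I ≠ ⊥) (htop : I ≠ ⊤) {S : Submonoid R}
    (hS : (endoRing K I : Set K) =
      {x | ∃ a : R, ∃ s ∈ S, x * algebraMap R K s = algebraMap R K a}) {Q : Ideal R}
    (hQ : (Q : Set R) ⊆ ZSet I) {x : K} (hx : x ∈ endoRing K I) : x ∈ loc K Q := by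
  rw [← SetLike.mem_coe, hS] at hx
  obtain ⟨a, s, hs, hxs⟩ := hx
  exact ⟨a, s, fun hsQ => notMem_ZSet_of_mem_submonoid hbot htop hS hs (hQ hsQ), hxs⟩

end FractionRing

section Statements

variable {R : Type*} [CommRing R] [IsDomain R]
variable {K : Type*} [Field K] [Algebra R K] [IsFractionRing R K]

/-- Let `I` be a `t`-ideal of a PVMD `R`, `{Q_α}` the maximal prime
ideals of `Z(R, I)` and `{M_β}` the `t`-maximal ideals of `R` not containing `I`. Then
`(I : I) ⊇ (⋂ R_{Q_α}) ∩ (⋂ R_{M_β})`, with equality when `R` is a `tQR`-domain. -/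
theorem statement_11 (hR : IsPVMD R K) (I : Ideal R) (hbot : I ≠ ⊥) (htop : I ≠ ⊤)
    (htI : IsTIdeal K I) :
    ((⋂ Q ∈ {Q : Ideal R | MaxPrimeOfZ I Q}, loc K Q) ∩
        (⋂ M ∈ {M : Ideal R | IsTMaximal K M ∧ ¬ I ≤ M}, loc K M) ⊆
      ((toK R K I / toK R K I : Submodule R K) : Set K)) ∧
      (IsTQR R K →
        ((toK R K I / toK R K I : Submodule R K) : Set K) =
          (⋂ Q ∈ {Q : Ideal R | MaxPrimeOfZ I Q}, loc K Q) ∩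
            (⋂ M ∈ {M : Ideal R | IsTMaximal K M ∧ ¬ I ≤ M}, loc K M)) := by
  rw [coe_div_toK_self]
  have hsub : (⋂ Q ∈ {Q : Ideal R | MaxPrimeOfZ I Q}, loc K Q) ∩
      (⋂ M ∈ {M : Ideal R | IsTMaximal K M ∧ ¬ I ≤ M}, loc K M) ⊆ endoRing K I :=
    fun x ⟨hxQ, hxM⟩ => mem_endoRing_of_forall_mem_loc hR htI (Set.mem_iInter₂.mp hxQ)
      fun M hM hIM => Set.mem_iInter₂.mp hxM M ⟨hM, hIM⟩
  refine ⟨hsub, fun hT => Set.Subset.antisymm (fun x hx => ?_) hsub⟩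
  obtain ⟨S, hS⟩ := hT.2 _ (isTLinked_endoRing htI)
  exact ⟨Set.mem_iInter₂.mpr fun Q hQ =>
      mem_loc_of_mem_endoRing_of_subset_ZSet hbot htop hS hQ.2.1 hx,
    Set.mem_iInter₂.mpr fun M hM => mem_loc_of_mem_endoRing_of_not_le hM.2 hx⟩

end Statements

end

end PVMDPaper
end

section
/- Let R be a PVMD, I a t-ideal of R, and T a t-linked overring of R contained in the Kaplansky transform Ω(I). If (IT)_{t₁} = T, where t₁ is the t-operation of the ring T, then T = Ω(I). -/
/-!
Common definitions: star operations (`v`- and `t`-closure), `t`-ideals, `t`-invertibility,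
PVMDs, overrings, `t`-linked and `t`-flat overrings, localizations inside the quotient
field, Nagata and Kaplansky transforms, endomorphism rings of ideals.
-/

open scoped Classical

namespace PVMDPaper

noncomputable section

/-!
Take `u ∈ Ω(I)`. Since `(IT)_t = T`, some finitely generated `J ≤ IT` has `(T : J) = T`, and
`J ≤ J₀T` for a finitely generated `J₀ ≤ I`; hence `J₀⁻¹ ⊆ T`. As `J₀` is finitely generated,
`u` lies in its Nagata transform: `u J₀ⁿ ⊆ R` for some `n`. Because `R` is a PVMD, `J₀ J₀⁻¹`
contains a finitely generated `B` with `B⁻¹ = R`, so `u Bⁿ ⊆ (u J₀ⁿ)(J₀⁻¹)ⁿ ⊆ T`. Finally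
`(Bⁿ)⁻¹ = R` and `T` is `t`-linked, so `(BⁿT)⁻¹ = T`, which contains `u`.
-/

open _root_.Submodule

section SubmoduleDiv

variable {A K : Type*} [CommSemiring A] [CommSemiring K] [Algebra A K]

theorem _root_.Submodule.one_div_le_one_div_of_le {J J' : Submodule A K} (h : J ≤ J') :
    1 / J' ≤ 1 / J :=
  Submodule.le_div_iff_mul_le.mpr <|
    (mul_le_mul' le_rfl h).trans (Submodule.le_div_iff_mul_le.mp le_rfl)

theorem _root_.Submodule.one_div_mul_eq_one {M N : Submodule A K} (hM : 1 / M = 1)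
    (hN : 1 / N = 1) : 1 / (M * N) = 1 := by
  refine le_antisymm ?_ (one_le_one_div.mpr ?_)
  · have h : 1 / (M * N) * M ≤ 1 / N := Submodule.le_div_iff_mul_le.mpr <| by
      rw [mul_assoc]
      exact Submodule.le_div_iff_mul_le.mp le_rfl
    calc 1 / (M * N) ≤ 1 / M := Submodule.le_div_iff_mul_le.mpr (h.trans hN.le)
      _ = 1 := hM
  · exact mul_le_one' (one_le_one_div.mp hM.ge) (one_le_one_div.mp hN.ge)

theorem _root_.Submodule.one_div_pow_eq_one {M : Submodule A K} (hM : 1 / M = 1) (n : ℕ) :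
    1 / M ^ n = 1 := by
  induction n with
  | zero =>
    refine le_antisymm ?_ (one_le_one_div.mpr le_rfl)
    simpa using Submodule.le_div_iff_mul_le.mp (le_refl (1 / 1 : Submodule A K))
  | succ n ih => rw [pow_succ, one_div_mul_eq_one ih hM]

theorem _root_.Submodule.exists_finite_subset_le_span {M : Type*} [AddCommMonoid M]
    [Module A M] {S : Set M} {J : Submodule A M} (hJ : J.FG) (hJS : J ≤ span A S) :
    ∃ t ⊆ S, t.Finite ∧ J ≤ span A t := by
  obtain ⟨s, hs, rfl⟩ := fg_def.mp hJ
  have hgen (x : s) : ∃ t : Finset M, ↑t ⊆ S ∧ x.1 ∈ span A (t : Set M) :=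
    mem_span_finite_of_mem_span (hJS (subset_span x.2))
  choose t htS hxt using hgen
  have : Finite s := hs
  refine ⟨⋃ x, t x, Set.iUnion_subset htS, Set.finite_iUnion fun x => (t x).finite_toSet, ?_⟩
  exact span_le.mpr fun x hx => span_mono (Set.subset_iUnion (fun x => (t x : Set M)) ⟨x, hx⟩)
    (hxt ⟨x, hx⟩)

end SubmoduleDiv

section FractionalIdeals

variable {A K : Type*} [CommRing A] [Field K] [Algebra A K]

theorem toK_pow (I : Ideal A) (n : ℕ) : toK A K (I ^ n) = toK A K I ^ n :=
  Submodule.map_pow I (Algebra.ofId A K) n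

theorem dual_eq_one_of_le_one {J : Submodule A K} (hJ : J ≤ 1) (hJd : 1 / J ≤ 1) : dual J = 1 :=
  le_antisymm hJd (one_le_one_div.mpr hJ)

theorem exists_fg_le_of_tOp_eq_one {I : Submodule A K} (h : tOp I = 1) :
    ∃ J : Submodule A K, J ≠ ⊥ ∧ J.FG ∧ J ≤ I ∧ 1 / J ≤ 1 := by
  set S := {V | ∃ J : Submodule A K, J ≠ ⊥ ∧ J.FG ∧ J ≤ I ∧ V = vOp J}
  have hone : (1 : K) ∈ sSup S := by
    rw [← tOp, h]
    exact one_le.mp le_rfl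
  have hS : S.Nonempty := by
    by_contra hS
    rw [Set.not_nonempty_iff_eq_empty] at hS
    simp [hS] at hone
  have hdir : DirectedOn (· ≤ ·) S := by
    rintro _ ⟨J₁, hJ₁, hJ₁fg, hJ₁I, rfl⟩ _ ⟨J₂, -, hJ₂fg, hJ₂I, rfl⟩
    refine ⟨vOp (J₁ ⊔ J₂), ⟨J₁ ⊔ J₂, ?_, hJ₁fg.sup hJ₂fg, sup_le hJ₁I hJ₂I, rfl⟩, ?_, ?_⟩
    · exact fun h => hJ₁ (le_bot_iff.mp (h ▸ le_sup_left))
    · exact one_div_le_one_div_of_le (one_div_le_one_div_of_le le_sup_left)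
    · exact one_div_le_one_div_of_le (one_div_le_one_div_of_le le_sup_right)
  obtain ⟨_, ⟨J, hJ, hJfg, hJI, rfl⟩, hJ1⟩ := (mem_sSup_of_directed hS hdir).mp hone
  exact ⟨J, hJ, hJfg, hJI, fun x hx => by simpa using hJ1 x hx⟩

theorem exists_fg_toK_eq {B : Submodule A K} (hB1 : B ≤ 1) (hB : B.FG) :
    ∃ B₀ : Ideal A, B₀.FG ∧ toK A K B₀ = B := by
  obtain ⟨s, hs, rfl⟩ := fg_def.mp hB
  have hsR : s ⊆ algebraMap A K '' Set.univ := fun x hx => by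
    simpa [mem_one] using hB1 (subset_span hx)
  obtain ⟨t, -, ht, rfl⟩ := Set.exists_subset_image_finite_and.mp ⟨s, hsR, hs, rfl⟩
  exact ⟨Ideal.span t, fg_span ht, by rw [toK, Ideal.span, map_span]; rfl⟩

theorem IsPVMD.exists_fg_dual_eq_one_le (hA : IsPVMD A K) {J : Ideal A} (hJ : J ≠ ⊥)
    (hJfg : J.FG) :
    ∃ B : Ideal A, B.FG ∧ dual (toK A K B) = 1 ∧ toK A K B ≤ toK A K J * dual (toK A K J) := by
  obtain ⟨B, -, hBfg, hBJ, hBd⟩ := exists_fg_le_of_tOp_eq_one (hA J hJ hJfg)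
  have hB1 : B ≤ 1 := hBJ.trans mul_one_div_le_one
  obtain ⟨B₀, hB₀fg, rfl⟩ := exists_fg_toK_eq hB1 hBfg
  exact ⟨B₀, hB₀fg, dual_eq_one_of_le_one hB1 hBd, hBJ⟩

end FractionalIdeals

section Overrings

variable {R K : Type*} [CommRing R] [Field K] [Algebra R K]

theorem mem_one_submodule_iff {T : Subalgebra R K} {x : K} :
    x ∈ (1 : Submodule T K) ↔ x ∈ T := by
  rw [mem_one]
  exact ⟨by rintro ⟨y, rfl⟩; exact y.2, fun hx => ⟨⟨x, hx⟩, rfl⟩⟩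

theorem extendI_eq_span_toK (I : Ideal R) (T : Subalgebra R K) :
    extendI I T = span T (toK R K I : Set K) := by
  rw [extendI, toK, map_coe]
  rfl

theorem mem_one_div_span_of_mem_div {T : Subalgebra R K} {M : Submodule R K} {x : K}
    (hx : x ∈ Subalgebra.toSubmodule T / M) : x ∈ (1 : Submodule T K) / span T (M : Set K) := by
  rw [← span_singleton_le_iff_mem, Submodule.le_div_iff_mul_le, span_mul_span, span_le]
  rintro _ ⟨_, rfl, m, hm, rfl⟩
  exact mem_one_submodule_iff.mpr (hx m hm)

theorem exists_fg_le_extendI {I : Ideal R} {T : Subalgebra R K} {J : Submodule T K}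
    (hJ : J.FG) (hJI : J ≤ extendI I T) :
    ∃ J₀ : Ideal R, J₀.FG ∧ J₀ ≤ I ∧ J ≤ extendI J₀ T := by
  obtain ⟨t, htI, ht, hJt⟩ := exists_finite_subset_le_span hJ hJI
  obtain ⟨t₀, ht₀I, ht₀, hJt₀⟩ := (Set.exists_subset_image_finite_and
    (p := fun t => J ≤ span T t)).mp ⟨t, htI, ht, hJt⟩
  exact ⟨Ideal.span t₀, fg_span ht₀, Ideal.span_le.mpr ht₀I,
    hJt₀.trans (span_mono (Set.image_mono Ideal.subset_span))⟩

theorem dual_toK_le_of_le_extendI {T : Subalgebra R K} {J : Submodule T K} (hJ : 1 / J ≤ 1)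
    {J₀ : Ideal R} (hJJ₀ : J ≤ extendI J₀ T) :
    dual (toK R K J₀) ≤ Subalgebra.toSubmodule T := by
  intro x hx
  have hxT : x ∈ Subalgebra.toSubmodule T / toK R K J₀ := fun y hy =>
    one_le.mpr (one_mem T) (hx y hy)
  have hx' := mem_one_div_span_of_mem_div hxT
  rw [← extendI_eq_span_toK] at hx'
  exact mem_one_submodule_iff.mp (hJ (one_div_le_one_div_of_le hJJ₀ hx'))

theorem IsTLinked.mem_of_mem_div {T : Subalgebra R K} (hT : IsTLinked T) {B : Ideal R}
    (hB : B.FG) (hBd : dual (toK R K B) = 1) {u : K}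
    (hu : u ∈ Subalgebra.toSubmodule T / toK R K B) : u ∈ T := by
  have hu' := mem_one_div_span_of_mem_div hu
  rwa [← extendI_eq_span_toK, ← dual, hT B hB hBd, mem_one_submodule_iff] at hu'

theorem kaplansky_antitone {I J : Ideal R} (h : J ≤ I) : kaplansky K I ≤ kaplansky K J :=
  fun _ hu a ha => hu a (h ha)

theorem mem_nagata_iff {J : Ideal R} {u : K} :
    u ∈ nagata K J ↔ ∃ n, u ∈ dual (toK R K (J ^ (n + 1))) := by
  refine exists_congr fun n => ⟨fun h _ ⟨a, ha, hau⟩ => ?_, fun h a ha => ?_⟩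
  · obtain ⟨r, hr⟩ := h a ha
    exact mem_one.mpr ⟨r, hau ▸ hr.symm⟩
  · obtain ⟨r, hr⟩ := mem_one.mp (h _ ⟨a, ha, rfl⟩)
    exact ⟨r, hr.symm⟩

theorem kaplansky_le_nagata {J : Ideal R} (hJ : J.FG) : kaplansky K J ≤ nagata K J := by
  intro u hu
  let Q : Ideal R := (1 : Submodule R K).comap (LinearMap.mulLeft R u ∘ₗ Algebra.linearMap R K)
  have hQ (y : R) : y ∈ Q ↔ ∃ r, u * algebraMap R K y = algebraMap R K r := by
    simp [Q, mem_one, eq_comm]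
  have hJQ : J ≤ Q.radical := fun a ha => by
    obtain ⟨n, -, r, hr⟩ := hu a ha
    exact ⟨n, (hQ _).mpr ⟨r, by rw [map_pow, hr]⟩⟩
  obtain ⟨N, hN⟩ := Ideal.exists_pow_le_of_le_radical_of_fg hJQ hJ
  exact ⟨N, fun y hy => (hQ y).mp (hN (Ideal.pow_le_pow_right N.le_succ hy))⟩

theorem IsTLinked.nagata_le {T : Subalgebra R K} (hT : IsTLinked T) (hR : IsPVMD R K)
    {J : Ideal R} (hJ : J ≠ ⊥) (hJfg : J.FG)
    (hJT : dual (toK R K J) ≤ Subalgebra.toSubmodule T) : nagata K J ≤ T := by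
  intro u hu
  obtain ⟨n, hn⟩ := mem_nagata_iff.mp hu
  obtain ⟨B, hBfg, hBd, hBJ⟩ := hR.exists_fg_dual_eq_one_le hJ hJfg
  have hBnd : dual (toK R K (B ^ (n + 1))) = 1 := by
    rw [toK_pow]
    exact one_div_pow_eq_one hBd _
  refine hT.mem_of_mem_div hBfg.pow hBnd ?_
  rw [dual, ← span_singleton_le_iff_mem, Submodule.le_div_iff_mul_le] at hn
  rw [← span_singleton_le_iff_mem, Submodule.le_div_iff_mul_le]
  calc span R {u} * toK R K (B ^ (n + 1))
      ≤ span R {u} * (toK R K J * dual (toK R K J)) ^ (n + 1) := by rw [toK_pow]; gcongr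
    _ = span R {u} * toK R K (J ^ (n + 1)) * dual (toK R K J) ^ (n + 1) := by
      rw [mul_pow, toK_pow, mul_assoc]
    _ ≤ 1 * Subalgebra.toSubmodule T ^ (n + 1) := by gcongr
    _ = Subalgebra.toSubmodule T := by
      rw [one_mul, (Subalgebra.isIdempotentElem_toSubmodule T).pow_succ_eq]

end Overrings

section Statements

variable {R : Type*} [CommRing R] [IsDomain R]
variable {K : Type*} [Field K] [Algebra R K] [IsFractionRing R K]

theorem statement_15_general (hR : IsPVMD R K) (I : Ideal R)
    (T : Subalgebra R K) (hTl : IsTLinked T)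
    (hTsub : (T : Set K) ⊆ (kaplansky K I : Set K))
    (h : tOp (extendI I T) = 1) :
    (T : Set K) = (kaplansky K I : Set K) := by
  refine hTsub.antisymm fun u hu => ?_
  obtain ⟨J, hJ, hJfg, hJI, hJd⟩ := exists_fg_le_of_tOp_eq_one h
  obtain ⟨J₀, hJ₀fg, hJ₀I, hJJ₀⟩ := exists_fg_le_extendI hJfg hJI
  have hJ₀ : J₀ ≠ ⊥ := by
    rintro rfl
    exact hJ (le_bot_iff.mp (hJJ₀.trans (by simp [extendI])))
  exact hTl.nagata_le hR hJ₀ hJ₀fg (dual_toK_le_of_le_extendI hJd hJJ₀)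
    (kaplansky_le_nagata hJ₀fg (kaplansky_antitone hJ₀I hu))

/-- Let `R` be a PVMD, `I` a `t`-ideal of `R`, and `T` a `t`-linked
overring of `R` contained in `Ω(I)`. If `(IT)_{t₁} = T` then `T = Ω(I)`. -/
theorem statement_15 (hR : IsPVMD R K) (I : Ideal R) (hbot : I ≠ ⊥) (htI : IsTIdeal K I)
    (T : Subalgebra R K) (hTl : IsTLinked T)
    (hTsub : (T : Set K) ⊆ (kaplansky K I : Set K))
    (h : tOp (extendI I T) = 1) :
    (T : Set K) = (kaplansky K I : Set K) :=
  statement_15_general hR I T hTl hTsub h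

end Statements

end

end PVMDPaper
end
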